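/- arXiv:1407.4763 — 2 statements merged into one kernel-verified Lean document; each statement's English description precedes it below -/
import Mathlib

section
/- Let l ≥ 1 be an integer. For z, w ∈ ℂ with |z|² + |w|² = 1, the coefficient of ζ^l ω^l in (zζ+wω)^l·(−conj(w)ζ+conj(z)ω)^l vanishes if and only if p_l(|z|²) = 0, where p_l(X) = Σ_{i=0}^{l} (−1)^i (binom(l,i))² X^{l−i}(1−X)^i. In particular, there exists A = {z,w} ∈ SU(2) such that the projection of A·(ζ^lω^l) onto ℂ·ζ^lω^l is zero. -/
/-!
By the binomial theorem the coefficient of `ζ^l ω^l` in `A·(ζ^l ω^l)` is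
`∑ binom(l,i)² (z z̄)^i (-w w̄)^(l-i) = p_l(|z|²)`. In the Bernstein basis
`p_l = ∑ (-1)^i binom(l,i) b_{l,l-i}`, and all `b_{l,ν}` have the same integral over `[0,1]`
(integrate the derivative formula for `b_{l+1,ν+1}`, which vanishes at both ends). Hence
`∫₀¹ p_l = (∫₀¹ b_{l,0}) · ∑ (-1)^i binom(l,i) = 0` for `l ≥ 1`, so by the mean value theorem for
integrals `p_l(x) = 0` for some `x ∈ (0,1)`, and `z = √x`, `w = √(1-x)` is the required element.
-/

open MvPolynomial Finset

section BinaryForms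

variable {R : Type*} [CommSemiring R]

theorem linearForm_pow_eq_sum_monomial (a b : R) (n : ℕ) :
    (C a * X (0 : Fin 2) + C b * X 1) ^ n =
      ∑ i ∈ range (n + 1), monomial (Finsupp.single 0 i + Finsupp.single 1 (n - i))
        (n.choose i * (a ^ i * b ^ (n - i))) := by
  rw [add_pow]
  refine sum_congr rfl fun i _ => ?_
  rw [mul_pow, mul_pow, ← C_pow, ← C_pow, X_pow_eq_monomial, X_pow_eq_monomial, C_mul_monomial,
    C_mul_monomial, monomial_mul, ← C_eq_coe_nat, mul_comm _ (C _), C_mul_monomial]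
  ring_nf

theorem single_add_single_add_eq_iff {i j l : ℕ} (hi : i ≤ l) (hj : j ≤ l) :
    Finsupp.single (0 : Fin 2) i + Finsupp.single 1 (l - i) +
        (Finsupp.single 0 j + Finsupp.single 1 (l - j)) =
      Finsupp.single 0 l + Finsupp.single 1 l ↔ j = l - i := by
  simp only [Finsupp.ext_iff, Fin.forall_fin_two, Finsupp.coe_add, Pi.add_apply,
    Finsupp.single_apply, Fin.isValue, ↓reduceIte, one_ne_zero, zero_ne_one, add_zero, zero_add]
  omega

theorem coeff_linearForm_pow_mul_linearForm_pow (a b c d : R) (l : ℕ) :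
    coeff (Finsupp.single 0 l + Finsupp.single 1 l)
        ((C a * X (0 : Fin 2) + C b * X 1) ^ l * (C c * X 0 + C d * X 1) ^ l) =
      ∑ i ∈ range (l + 1), (l.choose i : R) ^ 2 * (a * d) ^ i * (b * c) ^ (l - i) := by
  rw [linearForm_pow_eq_sum_monomial, linearForm_pow_eq_sum_monomial, sum_mul_sum, coeff_sum]
  refine sum_congr rfl fun i hi => ?_
  have hi : i ≤ l := mem_range_succ_iff.mp hi
  simp only [coeff_sum, monomial_mul, coeff_monomial]
  rw [sum_congr rfl fun j hj => if_congr
      (single_add_single_add_eq_iff hi (mem_range_succ_iff.mp hj)) rfl rfl,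
    sum_ite_eq' (range (l + 1)) (l - i), if_pos (mem_range.mpr (by omega)), Nat.sub_sub_self hi,
    Nat.choose_symm hi]
  ring

end BinaryForms

theorem intervalIntegral_eval_derivative (p : Polynomial ℝ) (a b : ℝ) :
    ∫ x in a..b, (Polynomial.derivative p).eval x = p.eval b - p.eval a :=
  intervalIntegral.integral_eq_sub_of_hasDerivAt (fun x _ => p.hasDerivAt x)
    (p.derivative.continuous.intervalIntegrable a b)

theorem integral_bernsteinPolynomial_succ {n ν : ℕ} (h : ν < n) :
    ∫ x in (0 : ℝ)..1, (bernsteinPolynomial ℝ n (ν + 1)).eval x =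
      ∫ x in (0 : ℝ)..1, (bernsteinPolynomial ℝ n ν).eval x := by
  have hderiv := intervalIntegral_eval_derivative (bernsteinPolynomial ℝ (n + 1) (ν + 1)) 0 1
  rw [bernsteinPolynomial.derivative_succ, bernsteinPolynomial.eval_at_0,
    bernsteinPolynomial.eval_at_1, if_neg (by omega), if_neg (by omega)] at hderiv
  simp only [Nat.add_sub_cancel, Polynomial.eval_mul, Polynomial.eval_sub, Polynomial.eval_natCast,
    intervalIntegral.integral_const_mul] at hderiv
  rw [intervalIntegral.integral_sub ((Polynomial.continuous _).intervalIntegrable _ _)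
    ((Polynomial.continuous _).intervalIntegrable _ _)] at hderiv
  rw [sub_zero, mul_eq_zero, sub_eq_zero] at hderiv
  exact (hderiv.resolve_left (by positivity)).symm

theorem integral_bernsteinPolynomial_eq_integral_zero {n ν : ℕ} (h : ν ≤ n) :
    ∫ x in (0 : ℝ)..1, (bernsteinPolynomial ℝ n ν).eval x =
      ∫ x in (0 : ℝ)..1, (bernsteinPolynomial ℝ n 0).eval x := by
  induction ν with
  | zero => rfl
  | succ ν ih => rw [integral_bernsteinPolynomial_succ h, ih (by omega)]

theorem exists_mem_Ioo_eq_zero_of_intervalIntegral_eq_zero {f : ℝ → ℝ} {a b : ℝ} (hab : a ≠ b)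
    (hf : ContinuousOn f (Set.uIcc a b)) (h : ∫ x in a..b, f x = 0) :
    ∃ c ∈ Set.uIoo a b, f c = 0 := by
  obtain ⟨c, hc, hfc⟩ := exists_eq_interval_average hab hf
  exact ⟨c, hc, by rw [hfc, interval_average_eq_div, h, zero_div]⟩

/-- `p_l`, the shifted Legendre polynomial `P_l(2X - 1)`. -/
noncomputable def signedChooseSqPoly (l : ℕ) : Polynomial ℝ :=
  ∑ i ∈ range (l + 1),
    Polynomial.C ((-1 : ℝ) ^ i * (l.choose i : ℝ) ^ 2) * Polynomial.X ^ (l - i) *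
      (1 - Polynomial.X) ^ i

theorem signedChooseSqPoly_eq_sum_bernsteinPolynomial (l : ℕ) :
    signedChooseSqPoly l = ∑ i ∈ range (l + 1),
      Polynomial.C ((-1 : ℝ) ^ i * l.choose i) * bernsteinPolynomial ℝ l (l - i) := by
  refine sum_congr rfl fun i hi => ?_
  have hi : i ≤ l := mem_range_succ_iff.mp hi
  rw [bernsteinPolynomial, Nat.choose_symm hi, Nat.sub_sub_self hi]
  simp only [map_mul, map_pow, map_natCast]
  ring

theorem eval_signedChooseSqPoly (l : ℕ) (x : ℝ) :
    (signedChooseSqPoly l).eval x =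
      ∑ i ∈ range (l + 1), (l.choose i : ℝ) ^ 2 * x ^ i * (x - 1) ^ (l - i) := by
  rw [signedChooseSqPoly, Polynomial.eval_finsetSum, ← sum_range_reflect]
  refine sum_congr rfl fun i hi => ?_
  have hi : i ≤ l := mem_range_succ_iff.mp hi
  rw [add_tsub_cancel_right, Nat.sub_sub_self hi, Nat.choose_symm hi,
    ← neg_sub 1 x, neg_pow (1 - x)]
  simp only [Polynomial.eval_mul, Polynomial.eval_C, Polynomial.eval_pow, Polynomial.eval_sub,
    Polynomial.eval_one, Polynomial.eval_X]
  ring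

theorem integral_eval_signedChooseSqPoly {l : ℕ} (hl : l ≠ 0) :
    ∫ x in (0 : ℝ)..1, (signedChooseSqPoly l).eval x = 0 := by
  simp only [signedChooseSqPoly_eq_sum_bernsteinPolynomial, Polynomial.eval_finsetSum,
    Polynomial.eval_mul, Polynomial.eval_C]
  rw [intervalIntegral.integral_finsetSum fun i _ =>
    ((Polynomial.continuous _).const_mul _ ).intervalIntegrable _ _]
  have hsum : ∑ i ∈ range (l + 1), (-1 : ℝ) ^ i * l.choose i = 0 := by
    exact_mod_cast (Int.alternating_sum_range_choose (n := l)).trans (if_neg hl)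
  calc _ = ∑ i ∈ range (l + 1), (-1 : ℝ) ^ i * l.choose i *
        ∫ x in (0 : ℝ)..1, (bernsteinPolynomial ℝ l 0).eval x := by
          refine sum_congr rfl fun i hi => ?_
          rw [intervalIntegral.integral_const_mul,
            integral_bernsteinPolynomial_eq_integral_zero (Nat.sub_le l i)]
    _ = 0 := by rw [← sum_mul, hsum, zero_mul]

theorem coeff_su2_smul_eq_eval_signedChooseSqPoly (l : ℕ) {z w : ℂ} (h : ‖z‖ ^ 2 + ‖w‖ ^ 2 = 1) :
    coeff (Finsupp.single 0 l + Finsupp.single 1 l)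
        ((C z * X (0 : Fin 2) + C w * X 1) ^ l *
          (C (-(starRingEnd ℂ w)) * X 0 + C (starRingEnd ℂ z) * X 1) ^ l) =
      (((signedChooseSqPoly l).eval (‖z‖ ^ 2) : ℝ) : ℂ) := by
  have hw : w * -(starRingEnd ℂ w) = (‖z‖ : ℂ) ^ 2 - 1 := by
    have h' : (‖z‖ : ℂ) ^ 2 + (‖w‖ : ℂ) ^ 2 = 1 := by exact_mod_cast h
    rw [mul_neg, Complex.mul_conj']
    linear_combination -h'
  rw [coeff_linearForm_pow_mul_linearForm_pow, Complex.mul_conj', hw, eval_signedChooseSqPoly]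
  push_cast
  rfl

theorem exists_mem_Ioo_eval_signedChooseSqPoly_eq_zero {l : ℕ} (hl : l ≠ 0) :
    ∃ x ∈ Set.Ioo (0 : ℝ) 1, (signedChooseSqPoly l).eval x = 0 := by
  simpa using exists_mem_Ioo_eq_zero_of_intervalIntegral_eq_zero zero_ne_one
    (signedChooseSqPoly l).continuous.continuousOn (integral_eval_signedChooseSqPoly hl)

/-- For `l ≥ 1` and `{z,w} ∈ SU(2)`, the coefficient of `ζ^l ω^l` in
`(zζ+wω)^l (−conj(w)ζ+conj(z)ω)^l` vanishes iff `p_l(|z|²) = 0`, where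
`p_l(X) = ∑_{i=0}^{l} (−1)^i (binom(l,i))² X^{l−i}(1−X)^i`; in particular some `A = {z,w} ∈ SU(2)`
kills the projection of `A·(ζ^l ω^l)` onto `ℂ·ζ^l ω^l`. -/
theorem stmt7 (l : ℕ) (hl : 1 ≤ l) (p : Polynomial ℝ)
    (hp : p = ∑ i ∈ Finset.range (l + 1),
        Polynomial.C ((-1 : ℝ) ^ i * (l.choose i : ℝ) ^ 2) * Polynomial.X ^ (l - i) *
          (1 - Polynomial.X) ^ i) :
    (∀ z w : ℂ, ‖z‖ ^ 2 + ‖w‖ ^ 2 = 1 →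
      (MvPolynomial.coeff ((Finsupp.single 0 l + Finsupp.single 1 l : Fin 2 →₀ ℕ))
          ((MvPolynomial.C z * MvPolynomial.X (0 : Fin 2) +
                MvPolynomial.C w * MvPolynomial.X 1) ^ l *
            (MvPolynomial.C (-(starRingEnd ℂ w)) * MvPolynomial.X 0 +
                MvPolynomial.C (starRingEnd ℂ z) * MvPolynomial.X 1) ^ l) = 0 ↔
        p.eval (‖z‖ ^ 2) = 0)) ∧
    ∃ z w : ℂ, ‖z‖ ^ 2 + ‖w‖ ^ 2 = 1 ∧
      MvPolynomial.coeff ((Finsupp.single 0 l + Finsupp.single 1 l : Fin 2 →₀ ℕ))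
          ((MvPolynomial.C z * MvPolynomial.X (0 : Fin 2) +
                MvPolynomial.C w * MvPolynomial.X 1) ^ l *
            (MvPolynomial.C (-(starRingEnd ℂ w)) * MvPolynomial.X 0 +
                MvPolynomial.C (starRingEnd ℂ z) * MvPolynomial.X 1) ^ l) = 0 := by
  obtain rfl : p = signedChooseSqPoly l := hp
  refine ⟨fun z w h => ?_, ?_⟩
  · rw [coeff_su2_smul_eq_eval_signedChooseSqPoly l h, Complex.ofReal_eq_zero]
  obtain ⟨x, hx, hroot⟩ := exists_mem_Ioo_eval_signedChooseSqPoly_eq_zero (by omega : l ≠ 0)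
  have hz : ‖((√x : ℝ) : ℂ)‖ ^ 2 = x := by simp [hx.1.le]
  have hw : ‖((√(1 - x) : ℝ) : ℂ)‖ ^ 2 = 1 - x := by simp [hx.2.le]
  have hzw : ‖((√x : ℝ) : ℂ)‖ ^ 2 + ‖((√(1 - x) : ℝ) : ℂ)‖ ^ 2 = 1 := by rw [hz, hw]; ring
  exact ⟨_, _, hzw, by rw [coeff_su2_smul_eq_eval_signedChooseSqPoly l hzw, hz, hroot,
    Complex.ofReal_zero]⟩
end

section
/- Let s ∈ ℕ. There exists a constant C > 0, depending only on s, with the following property: for all α, a ∈ ℝ, all K > 0, every integer N ≥ 1, and every trigonometric polynomial f(x) = Σ_{k∈Λ} c_k e^{2πikx} whose spectrum Λ is contained in {k ∈ ℤ : |k| ≤ N and |kα − 2a|_ℤ ≥ K⁻¹}, there exists a trigonometric polynomial Y with spectrum contained in Λ such that e^{−4πia} Y(x+α) − Y(x) + f(x) = 0 for all x ∈ ℝ, and ‖Y‖_{C^s} ≤ C K N^{s+1} sup_{x∈ℝ} |f(x)|. -/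
/-!
In the Fourier basis the twisted equation is diagonal: its `k`-th coefficient reads
`(1 - e^{2πi(kα - 2a)}) d_k = c_k`. By Jordan's inequality the small divisor has modulus at least
`4 |kα - 2a|_ℤ ≥ 4 / K`, and `|c_k| ≤ sup |f|` because `c_k` is the integral of `f` against a
unimodular character. Differentiating `σ ≤ s` times multiplies `d_k` by `(2πik)^σ` with `|k| ≤ N`,
and there are at most `2N + 1 ≤ 3N` frequencies, which gives the bound with `C = 3 (2π)^s`.
-/

/-- The distance from a real number to the nearest integer, `|t|_ℤ`. -/
noncomputable def distInt (t : ℝ) : ℝ := |t - round t|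

/-- The trigonometric polynomial with spectrum in the finite set `S` and coefficients `c`. -/
noncomputable def trig (S : Finset ℤ) (c : ℤ → ℂ) (x : ℝ) : ℂ :=
  ∑ k ∈ S, c k * Complex.exp (2 * Real.pi * Complex.I * k * x)

open Complex
open scoped Real
open Real (pi_pos pi_ne_zero)

lemma four_mul_distInt_le_norm_exp_sub_one (t : ℝ) :
    4 * distInt t ≤ ‖exp (2 * π * I * t) - 1‖ := by
  set u := t - round t
  have hu : |π * u| ≤ π / 2 := by
    rw [abs_mul, abs_of_pos pi_pos]
    nlinarith [abs_sub_round t, pi_pos]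
  have hperiod : exp (2 * π * I * t) = exp (I * ↑(2 * π * u)) := by
    rw [← mul_one (exp (I * _)), ← exp_int_mul_two_pi_mul_I (round t), ← Complex.exp_add]
    push_cast [u]; ring_nf
  have hJordan := Real.mul_abs_le_abs_sin hu
  rw [abs_mul, abs_of_pos pi_pos, ← mul_assoc, div_mul_cancel₀ _ pi_ne_zero] at hJordan
  rw [hperiod, norm_exp_I_mul_ofReal_sub_one, norm_mul, Real.norm_eq_abs, Real.norm_eq_abs,
    show 2 * π * u / 2 = π * u by ring, abs_two]
  change 4 * |u| ≤ _
  linarith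

lemma norm_exp_two_pi_I_int_mul (k : ℤ) (x : ℝ) : ‖exp (2 * π * I * k * x)‖ = 1 := by
  rw [show 2 * π * I * k * x = ↑(2 * π * k * x) * I by push_cast; ring, norm_exp_ofReal_mul_I]

lemma integral_exp_two_pi_I_int_mul (n : ℤ) :
    ∫ x in (0 : ℝ)..1, exp (2 * π * I * n * x) = if n = 0 then 1 else 0 := by
  split_ifs with hn
  · simp [hn]
  · have h : 2 * π * I * n ≠ 0 := by simp [pi_ne_zero, hn]
    rw [integral_exp_mul_complex h, ofReal_one, mul_one, ofReal_zero, mul_zero, exp_zero,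
      show 2 * π * I * n = n * (2 * π * I) by ring, exp_int_mul_two_pi_mul_I, sub_self, zero_div]

lemma integral_trig_mul_exp {Λ : Finset ℤ} (c : ℤ → ℂ) {j : ℤ} (hj : j ∈ Λ) :
    ∫ x in (0 : ℝ)..1, trig Λ c x * exp (2 * π * I * ↑(-j) * x) = c j := by
  have hterm (k : ℤ) (x : ℝ) : c k * exp (2 * π * I * k * x) * exp (2 * π * I * ↑(-j) * x) =
      c k * exp (2 * π * I * ↑(k - j) * x) := by
    rw [mul_assoc, ← Complex.exp_add]; push_cast; ring_nf
  simp only [trig, Finset.sum_mul, hterm]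
  rw [intervalIntegral.integral_finsetSum fun k _ =>
    (by fun_prop : Continuous _).intervalIntegrable _ _]
  simp only [intervalIntegral.integral_const_mul, integral_exp_two_pi_I_int_mul, sub_eq_zero,
    mul_ite, mul_one, mul_zero, Finset.sum_ite_eq', if_pos hj]

lemma norm_trig_le_sum (Λ : Finset ℤ) (c : ℤ → ℂ) (x : ℝ) :
    ‖trig Λ c x‖ ≤ ∑ k ∈ Λ, ‖c k‖ :=
  (norm_sum_le _ _).trans_eq <| Finset.sum_congr rfl fun k _ => by
    rw [norm_mul, norm_exp_two_pi_I_int_mul, mul_one]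

lemma norm_trig_le_card_mul {Λ : Finset ℤ} {c : ℤ → ℂ} {B : ℝ} (hc : ∀ k ∈ Λ, ‖c k‖ ≤ B)
    (x : ℝ) : ‖trig Λ c x‖ ≤ Λ.card * B :=
  (norm_trig_le_sum Λ c x).trans <| by simpa using Finset.sum_le_card_nsmul Λ _ B hc

lemma norm_coeff_le_iSup_norm_trig {Λ : Finset ℤ} (c : ℤ → ℂ) {j : ℤ} (hj : j ∈ Λ) :
    ‖c j‖ ≤ ⨆ x, ‖trig Λ c x‖ := by
  have hbdd : BddAbove (Set.range fun x => ‖trig Λ c x‖) :=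
    ⟨_, Set.forall_mem_range.2 (norm_trig_le_sum Λ c)⟩
  rw [← integral_trig_mul_exp c hj]
  refine (intervalIntegral.norm_integral_le_of_norm_le_const fun x _ => ?_).trans_eq
    (by norm_num : (⨆ x, ‖trig Λ c x‖) * |(1 : ℝ) - 0| = _)
  rw [norm_mul, norm_exp_two_pi_I_int_mul, mul_one]
  exact le_ciSup hbdd x

lemma hasDerivAt_trig (Λ : Finset ℤ) (c : ℤ → ℂ) (x : ℝ) :
    HasDerivAt (trig Λ c) (trig Λ (fun k => 2 * π * I * k * c k) x) x := by
  unfold trig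
  refine HasDerivAt.fun_sum fun k _ => ?_
  have h := ((hasDerivAt_id' x).ofReal_comp.const_mul (2 * π * I * k)).cexp.const_mul (c k)
  exact h.congr_deriv (by push_cast; ring)

lemma iteratedDeriv_trig (σ : ℕ) (Λ : Finset ℤ) (c : ℤ → ℂ) :
    iteratedDeriv σ (trig Λ c) = trig Λ (fun k => (2 * π * I * k) ^ σ * c k) := by
  induction σ generalizing c with
  | zero => simp
  | succ σ ih =>
    rw [iteratedDeriv_succ', funext fun x => (hasDerivAt_trig Λ c x).deriv, ih]
    simp only [pow_succ, mul_assoc]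

noncomputable def smallDivisor (α a : ℝ) (k : ℤ) : ℂ := 1 - exp (2 * π * I * ↑(k * α - 2 * a))

lemma four_div_le_norm_smallDivisor {α a K : ℝ} {k : ℤ}
    (hk : K⁻¹ ≤ distInt (k * α - 2 * a)) : 4 / K ≤ ‖smallDivisor α a k‖ := calc
  4 / K = 4 * K⁻¹ := div_eq_mul_inv _ _
  _ ≤ 4 * distInt (k * α - 2 * a) := by gcongr
  _ ≤ ‖smallDivisor α a k‖ := by
      rw [smallDivisor, norm_sub_rev]
      exact four_mul_distInt_le_norm_exp_sub_one _

lemma smallDivisor_ne_zero {α a K : ℝ} {k : ℤ} (hK : 0 < K)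
    (hk : K⁻¹ ≤ distInt (k * α - 2 * a)) : smallDivisor α a k ≠ 0 :=
  norm_pos_iff.1 <| (by positivity : (0 : ℝ) < 4 / K).trans_le (four_div_le_norm_smallDivisor hk)

lemma norm_div_smallDivisor_le {α a K M : ℝ} {k : ℤ} {z : ℂ} (hK : 0 < K)
    (hk : K⁻¹ ≤ distInt (k * α - 2 * a)) (hz : ‖z‖ ≤ M) :
    ‖z / smallDivisor α a k‖ ≤ K / 4 * M := by
  have hlower := four_div_le_norm_smallDivisor hk
  rw [norm_div, div_le_iff₀ ((by positivity : (0 : ℝ) < 4 / K).trans_le hlower)]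
  calc ‖z‖ ≤ M := hz
    _ = K / 4 * M * (4 / K) := by field_simp
    _ ≤ K / 4 * M * ‖smallDivisor α a k‖ := by
        gcongr
        exact mul_nonneg (by positivity) ((norm_nonneg z).trans hz)

lemma twisted_trig_div_smallDivisor {α a : ℝ} {Λ : Finset ℤ} (c : ℤ → ℂ)
    (hΛ : ∀ k ∈ Λ, smallDivisor α a k ≠ 0) (x : ℝ) :
    exp (-(4 * π * I * a)) * trig Λ (fun k => c k / smallDivisor α a k) (x + α) -
      trig Λ (fun k => c k / smallDivisor α a k) x + trig Λ c x = 0 := by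
  simp only [trig, Finset.mul_sum, ← Finset.sum_sub_distrib, ← Finset.sum_add_distrib]
  refine Finset.sum_eq_zero fun k hk => ?_
  have hshift : exp (-(4 * π * I * a)) * exp (2 * π * I * k * ↑(x + α)) =
      (1 - smallDivisor α a k) * exp (2 * π * I * k * x) := by
    rw [smallDivisor, sub_sub_cancel, ← Complex.exp_add, ← Complex.exp_add]
    push_cast; ring_nf
  linear_combination (c k / smallDivisor α a k) * hshift -
    exp (2 * π * I * k * x) * div_mul_cancel₀ (c k) (hΛ k hk)

lemma norm_two_pi_I_int_mul_pow_le {k : ℤ} {N : ℕ} (hN : 1 ≤ N) (hk : |k| ≤ N) {σ s : ℕ}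
    (hσ : σ ≤ s) : ‖(2 * π * I * k) ^ σ‖ ≤ (2 * π * N) ^ s := by
  have hkN : |(k : ℝ)| ≤ N := by exact_mod_cast hk
  have hN' : (1 : ℝ) ≤ N := by exact_mod_cast hN
  calc ‖(2 * π * I * k) ^ σ‖ = (2 * π * |(k : ℝ)|) ^ σ := by
        simp [abs_of_pos pi_pos]
    _ ≤ (2 * π * N) ^ σ := by gcongr
    _ ≤ (2 * π * N) ^ s := pow_le_pow_right₀ (by nlinarith [Real.pi_gt_three]) hσ

lemma card_le_of_forall_abs_le {Λ : Finset ℤ} {N : ℕ} (hΛ : ∀ k ∈ Λ, |k| ≤ N) :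
    Λ.card ≤ 2 * N + 1 := by
  have h := Finset.card_le_card fun k hk => Finset.mem_Icc.2 (abs_le.1 (hΛ k hk))
  rw [Int.card_Icc] at h
  omega

/-- For `s ∈ ℕ` there is `C > 0` such that for all `α, a ∈ ℝ`, `K > 0`, `N ≥ 1`
and every trigonometric polynomial `f` whose spectrum `Λ` consists of non-resonant frequencies
(`|k| ≤ N` and `|kα − 2a|_ℤ ≥ K⁻¹`), the twisted equation
`e^{−4πia} Y(·+α) − Y + f = 0` has a solution with spectrum in `Λ` and
`‖Y‖_{C^s} ≤ C K N^{s+1} sup |f|`. -/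
theorem stmt12 (s : ℕ) :
    ∃ C : ℝ, 0 < C ∧
      ∀ α a K : ℝ, 0 < K →
      ∀ N : ℕ, 1 ≤ N →
      ∀ Λ : Finset ℤ, (∀ k ∈ Λ, |k| ≤ (N : ℤ) ∧ K⁻¹ ≤ distInt (k * α - 2 * a)) →
      ∀ c : ℤ → ℂ,
        ∃ d : ℤ → ℂ,
          (∀ x : ℝ,
              Complex.exp (-(4 * Real.pi * Complex.I * a)) * trig Λ d (x + α) -
                  trig Λ d x + trig Λ c x = 0) ∧
          ∀ σ : ℕ, σ ≤ s → ∀ x : ℝ,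
            ‖iteratedDeriv σ (trig Λ d) x‖ ≤
              C * K * (N : ℝ) ^ (s + 1) * ⨆ y : ℝ, ‖trig Λ c y‖ := by
  refine ⟨3 * (2 * π) ^ s, by positivity, fun α a K hK N hN Λ hΛ c => ?_⟩
  set M := ⨆ y, ‖trig Λ c y‖
  have hM : 0 ≤ M := Real.iSup_nonneg fun y => norm_nonneg _
  have hcoeff (k : ℤ) (hk : k ∈ Λ) : ‖c k / smallDivisor α a k‖ ≤ K / 4 * M :=
    norm_div_smallDivisor_le hK (hΛ k hk).2 (norm_coeff_le_iSup_norm_trig c hk)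
  have hne (k : ℤ) (hk : k ∈ Λ) : smallDivisor α a k ≠ 0 := smallDivisor_ne_zero hK (hΛ k hk).2
  refine ⟨fun k => c k / smallDivisor α a k, twisted_trig_div_smallDivisor c hne, fun σ hσ x => ?_⟩
  have hcard : (Λ.card : ℝ) ≤ 3 * N := by
    have := card_le_of_forall_abs_le fun k hk => (hΛ k hk).1
    exact_mod_cast (by omega : Λ.card ≤ 3 * N)
  rw [iteratedDeriv_trig]
  calc _ ≤ Λ.card * ((2 * π * N) ^ s * (K / 4 * M)) := norm_trig_le_card_mul (fun k hk => by
        rw [norm_mul]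
        exact mul_le_mul (norm_two_pi_I_int_mul_pow_le hN (hΛ k hk).1 hσ) (hcoeff k hk)
          (norm_nonneg _) (by positivity)) x
    _ ≤ 3 * N * ((2 * π * N) ^ s * (K / 4 * M)) := by gcongr
    _ ≤ 3 * (2 * π) ^ s * K * N ^ (s + 1) * M := by
        rw [mul_pow, pow_succ]
        nlinarith [show 0 ≤ (2 * π) ^ s * K * N ^ s * N * M by positivity]
end
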